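/- Let X be a Banach space with a Schauder basis {e_k; f_k} with ‖R_n‖ = 1 for all n, and let g_{N−1} : ℝ × X → X be continuous. Fix ε > 0, t_N ∈ ℝ, δ > 0, and (t,x) with |t − t_N| < δ. Then there exist a neighbourhood U of (t,x) in ℝ × X and K ∈ ℕ such that for all k ≥ K and (s,y) ∈ U: Q_k[g_{N−1}(s,y) + h(s−t_N, y) − Φ_{ε/4}(g_{N−1}(s,y))] = Q_k h(s−t_N, y), where Q_k = I − P_{k−1}. -/

import Mathlib

/-!
The basis expansion gives `Q_k z → 0`, so by continuity of `g` there are `K` and a neighbourhood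
`U` of `(t, x)` with `‖Q_K g(p)‖ < ε/4` on `U`. Since `‖Q_j‖ = 1` and `Q_j Q_K = Q_j` for `j ≥ K`,
every later tail `‖Q_j g(p)‖` is below `ε/4` as well, so the cutoff `φ_{ε/4}` equals `1` on all
coordinates `j ≥ K`. Those are the only coordinates `Q_k` sees for `k ≥ K`, hence
`Q_k Φ_{ε/4}(g p) = Q_k g(p)` and the two terms cancel.
-/

open Filter Finset Topology

/-- The tail projection `Q_{n+1} = I - P_n` associated to a Schauder basis system,
where `P_n x = ∑_{k<n} f_k(x) e_k`.  Thus `tailProj f e n` is the paper's `Q_{n+1}`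
and also its `R_n`. -/
noncomputable def tailProj {X : Type*} [NormedAddCommGroup X] [NormedSpace ℝ X]
    (f : ℕ → X →L[ℝ] ℝ) (e : ℕ → X) (n : ℕ) : X →L[ℝ] X :=
  ContinuousLinearMap.id ℝ X - ∑ k ∈ Finset.range n, (f k).smulRight (e k)

/-- The piecewise-linear cutoff function `φ_r`: equal to `1` on `[-r, r]`,
`0` outside `(-2r, 2r)`, and `2 - |t|/r` in between. -/
noncomputable def phi (r t : ℝ) : ℝ :=
  if |t| ≤ r then 1 else if |t| ≤ 2 * r then 2 - |t| / r else 0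

section TailProj

variable {X : Type*} [NormedAddCommGroup X] [NormedSpace ℝ X] (f : ℕ → X →L[ℝ] ℝ) (e : ℕ → X)

theorem tailProj_apply (n : ℕ) (z : X) :
    tailProj f e n z = z - ∑ k ∈ range n, f k z • e k := by
  simp [tailProj]

theorem tendsto_tailProj_atTop_zero {z : X}
    (hz : Tendsto (fun n => ∑ k ∈ range n, f k z • e k) atTop (𝓝 z)) :
    Tendsto (fun n => tailProj f e n z) atTop (𝓝 0) := by
  simpa [tailProj_apply] using (tendsto_const_nhds (x := z)).sub hz

variable {f e}

theorem tailProj_apply_basis (hbi : ∀ k j, f k (e j) = if k = j then (1 : ℝ) else 0)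
    (n j : ℕ) : tailProj f e n (e j) = if j < n then 0 else e j := by
  simp only [tailProj_apply, hbi, ite_smul, one_smul, zero_smul, sum_ite_eq', mem_range]
  split_ifs <;> simp

theorem tailProj_tailProj_of_le (hbi : ∀ k j, f k (e j) = if k = j then (1 : ℝ) else 0)
    {K j : ℕ} (hKj : K ≤ j) (z : X) :
    tailProj f e j (tailProj f e K z) = tailProj f e j z := by
  have hvanish : ∀ i ∈ range K, tailProj f e j (f i z • e i) = 0 := fun i hi => by
    rw [map_smul, tailProj_apply_basis hbi, if_pos ((mem_range.mp hi).trans_le hKj), smul_zero]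
  rw [tailProj_apply f e K, map_sub, map_sum, sum_eq_zero hvanish, sub_zero]

theorem norm_tailProj_le_of_le (hbi : ∀ k j, f k (e j) = if k = j then (1 : ℝ) else 0)
    {K j : ℕ} (hKj : K ≤ j) (hj : ‖tailProj f e j‖ ≤ 1) (z : X) :
    ‖tailProj f e j z‖ ≤ ‖tailProj f e K z‖ := by
  rw [← tailProj_tailProj_of_le hbi hKj z]
  exact (tailProj f e j).le_of_opNorm_le hj _ |>.trans_eq (one_mul _)

end TailProj

theorem phi_of_abs_le {r t : ℝ} (ht : |t| ≤ r) : phi r t = 1 := by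
  simp [phi, ht]

section Cutoff

variable {X : Type*} [NormedAddCommGroup X] [NormedSpace ℝ X] {f : ℕ → X →L[ℝ] ℝ} {e : ℕ → X}

/-- Coordinates below `k` are killed by `Q_k`, and from `k ≥ K` on the cutoff is `1`. -/
theorem tailProj_cutoff_sum_eq (hbi : ∀ k j, f k (e j) = if k = j then (1 : ℝ) else 0)
    {r : ℝ} {z : X} {K : ℕ} (hz : ∀ j, K ≤ j → ‖tailProj f e j z‖ ≤ r)
    {k : ℕ} (hk : K ≤ k) (n : ℕ) :
    tailProj f e k (∑ j ∈ range n, phi r ‖tailProj f e j z‖ • (f j z • e j)) =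
      tailProj f e k (∑ j ∈ range n, f j z • e j) := by
  simp only [map_sum, map_smul]
  refine sum_congr rfl fun j _ => ?_
  rcases lt_or_ge j k with hjk | hkj
  · simp [tailProj_apply_basis hbi, hjk]
  · rw [phi_of_abs_le ((abs_norm _).trans_le (hz j (hk.trans hkj))), one_smul]

theorem tailProj_eq_of_tendsto_cutoff_sum
    (hbi : ∀ k j, f k (e j) = if k = j then (1 : ℝ) else 0)
    {r : ℝ} {z w : X} {K : ℕ} (hz : ∀ j, K ≤ j → ‖tailProj f e j z‖ ≤ r)
    (hexp : Tendsto (fun n => ∑ j ∈ range n, f j z • e j) atTop (𝓝 z))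
    (hw : Tendsto (fun n => ∑ j ∈ range n, phi r ‖tailProj f e j z‖ • (f j z • e j))
      atTop (𝓝 w))
    {k : ℕ} (hk : K ≤ k) :
    tailProj f e k w = tailProj f e k z := by
  have hQw := ((tailProj f e k).continuous.tendsto w).comp hw
  have hQz := ((tailProj f e k).continuous.tendsto z).comp hexp
  refine tendsto_nhds_unique ?_ hQz
  simpa only [Function.comp_def, tailProj_cutoff_sum_eq hbi hz hk] using hQw

end Cutoff

theorem tail_cancellation_general
    {X : Type*} [NormedAddCommGroup X] [NormedSpace ℝ X]
    (e : ℕ → X) (f : ℕ → X →L[ℝ] ℝ)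
    (hexp : ∀ x : X, Tendsto (fun n => ∑ k ∈ Finset.range n, f k x • e k) atTop (𝓝 x))
    (hbi : ∀ k j, f k (e j) = if k = j then (1 : ℝ) else 0)
    (hR : ∀ n, 1 ≤ n → ‖tailProj f e n‖ = 1)
    (g h : ℝ × X → X) (hg : Continuous g)
    (ε : ℝ) (hε : 0 < ε)
    (Φ : X → X)
    (hΦ : ∀ z : X, Tendsto
      (fun n => ∑ k ∈ Finset.range n, phi (ε / 4) ‖tailProj f e k z‖ • (f k z • e k))
      atTop (𝓝 (Φ z)))
    (tN t : ℝ) (x : X) :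
    ∃ U ∈ 𝓝 ((t, x) : ℝ × X), ∃ K : ℕ, ∀ k, K ≤ k → ∀ p ∈ U,
      tailProj f e k (g p + h (p.1 - tN, p.2) - Φ (g p)) =
        tailProj f e k (h (p.1 - tN, p.2)) := by
  obtain ⟨K, hKx, hK1⟩ :=
    (((tendsto_tailProj_atTop_zero f e (hexp (g (t, x)))).eventually
      (Metric.ball_mem_nhds 0 (by positivity : (0 : ℝ) < ε / 4))).and
      (eventually_ge_atTop 1)).exists
  refine ⟨{p | ‖tailProj f e K (g p)‖ < ε / 4}, ?_, K, fun k hk p hp => ?_⟩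
  · exact (isOpen_lt ((tailProj f e K).continuous.comp hg).norm continuous_const).mem_nhds
      (mem_ball_zero_iff.mp hKx)
  · have hsmall : ∀ j, K ≤ j → ‖tailProj f e j (g p)‖ ≤ ε / 4 := fun j hj =>
      (norm_tailProj_le_of_le hbi hj (hR j (hK1.trans hj)).le _).trans (le_of_lt hp)
    rw [map_sub, map_add,
      tailProj_eq_of_tendsto_cutoff_sum hbi hsmall (hexp _) (hΦ (g p)) hk]
    abel

/-- In tail coordinates, the `Φ_{ε/4}` term cancels the `g_{N-1}` term:
locally around `(t,x)` with `|t - t_N| < δ`, for all large `k`,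
`Q_k [g(s,y) + h(s - t_N, y) - Φ_{ε/4}(g(s,y))] = Q_k h(s - t_N, y)`. -/
theorem tail_cancellation
    {X : Type*} [NormedAddCommGroup X] [NormedSpace ℝ X] [CompleteSpace X]
    (e : ℕ → X) (f : ℕ → X →L[ℝ] ℝ)
    (hexp : ∀ x : X, Tendsto (fun n => ∑ k ∈ Finset.range n, f k x • e k) atTop (𝓝 x))
    (hbi : ∀ k j, f k (e j) = if k = j then (1 : ℝ) else 0)
    (hR : ∀ n, 1 ≤ n → ‖tailProj f e n‖ = 1)
    (g h : ℝ × X → X) (hg : Continuous g)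
    (ε : ℝ) (hε : 0 < ε)
    (Φ : X → X)
    (hΦ : ∀ z : X, Tendsto
      (fun n => ∑ k ∈ Finset.range n, phi (ε / 4) ‖tailProj f e k z‖ • (f k z • e k))
      atTop (𝓝 (Φ z)))
    (tN δ t : ℝ) (hδ : 0 < δ) (x : X) (ht : |t - tN| < δ) :
    ∃ U ∈ 𝓝 ((t, x) : ℝ × X), ∃ K : ℕ, ∀ k, K ≤ k → ∀ p ∈ U,
      tailProj f e k (g p + h (p.1 - tN, p.2) - Φ (g p)) =
        tailProj f e k (h (p.1 - tN, p.2)) :=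
  tail_cancellation_general e f hexp hbi hR g h hg ε hε Φ hΦ tN t x
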